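/- arXiv:1301.7108 — 4 statements merged into one kernel-verified Lean document; each statement's English description precedes it below -/
import Mathlib

section
/- The set U = {(d, ρ) ∈ ℳ × ℳ_ℤ : ρ is a Katetov extension of d} is a G_δ subset of ℳ × ℳ_ℤ. -/
/-- The set `ℳ_A` of all metrics on `A`, viewed as a subset of `ℝ^{A×A}`. -/
def MetricsOn (A : Type) : Set ((A × A) → ℝ) :=
  {d | (∀ a b, 0 ≤ d (a, b)) ∧ (∀ a b, d (a, b) = 0 ↔ a = b) ∧
       (∀ a b, d (a, b) = d (b, a)) ∧ ∀ a b c, d (a, c) ≤ d (a, b) + d (b, c)}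
/-- `ρ` (a metric on `ℤ`) is a Katetov extension of `d` (a metric on `ℕ`): `ρ` extends `d`,
and for every finite nonempty `A ⊆ ℤ`, every `ε > 0` and every metric `d̃` on `A ∪ {*}`
(determined by the function `r x = d̃(x,*)`) which extends `ρ` on `A × A` and takes positive
rational values `d̃(x,*)`, there is `i ∈ ℤ ∖ A` with `|ρ(i,x) − d̃(*,x)| < ε` for all
`x ∈ A`. -/
def IsKatetovExt (d : (ℕ × ℕ) → ℝ) (ρ : (ℤ × ℤ) → ℝ) : Prop :=
  (∀ n m : ℕ, ρ ((n : ℤ), (m : ℤ)) = d (n, m)) ∧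
  ∀ A : Finset ℤ, A.Nonempty → ∀ ε : ℝ, 0 < ε → ∀ r : ℤ → ℝ,
    (∀ x ∈ A, ∃ q : ℚ, 0 < q ∧ r x = (q : ℝ)) →
    (∀ x ∈ A, ∀ y ∈ A, |r x - r y| ≤ ρ (x, y) ∧ ρ (x, y) ≤ r x + r y) →
    ∃ i : ℤ, i ∉ A ∧ ∀ x ∈ A, |ρ (i, x) - r x| < ε

namespace KatetovAux

abbrev X : Type := (MetricsOn ℕ) × (MetricsOn ℤ)

/-- evaluation of the second coordinate. -/
def evρ (i j : ℤ) : X → ℝ := fun p => p.2.val (i, j)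

lemma continuous_evρ (i j : ℤ) : Continuous (evρ i j) :=
  (continuous_apply ((i, j) : ℤ × ℤ)).comp (continuous_subtype_val.comp continuous_snd)

lemma continuous_evd (n m : ℕ) : Continuous (fun p : X => p.1.val (n, m)) :=
  (continuous_apply ((n, m) : ℕ × ℕ)).comp (continuous_subtype_val.comp continuous_fst)

/-- The basic open condition indexed by a finite set, a rational function on it, and `k`. -/
def Wset (A : Finset ℤ) (f : A → ℚ) (k : ℕ) : Set X :=
  {p | (A.Nonempty ∧ (∀ x : A, 0 < f x) ∧
        ∀ x y : A, |(f x : ℝ) - (f y : ℝ)| ≤ evρ x y p ∧ evρ x y p ≤ (f x : ℝ) + (f y : ℝ)) →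
       ∃ i : ℤ, i ∉ A ∧ ∀ x : A, |evρ i x p - (f x : ℝ)| < 1 / (k + 1)}

lemma isOpen_Wset (A : Finset ℤ) (f : A → ℚ) (k : ℕ) : IsOpen (Wset A f k) := by
  by_cases hc : A.Nonempty ∧ ∀ x : A, 0 < f x
  · have hQ : IsClosed {p : X | ∀ x y : A,
        |(f x : ℝ) - (f y : ℝ)| ≤ evρ x y p ∧ evρ x y p ≤ (f x : ℝ) + (f y : ℝ)} := by
      have h1 : {p : X | ∀ x y : A,
          |(f x : ℝ) - (f y : ℝ)| ≤ evρ x y p ∧ evρ x y p ≤ (f x : ℝ) + (f y : ℝ)} =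
          ⋂ x : A, ⋂ y : A, ({p : X | |(f x : ℝ) - (f y : ℝ)| ≤ evρ x y p} ∩
            {p : X | evρ x y p ≤ (f x : ℝ) + (f y : ℝ)}) := by
        ext p; simp [Set.mem_iInter, forall_and]
      rw [h1]
      exact isClosed_iInter fun x => isClosed_iInter fun y =>
        (isClosed_le continuous_const (continuous_evρ x y)).inter
          (isClosed_le (continuous_evρ x y) continuous_const)
    have h2 : Wset A f k =
        {p : X | ∀ x y : A,
          |(f x : ℝ) - (f y : ℝ)| ≤ evρ x y p ∧ evρ x y p ≤ (f x : ℝ) + (f y : ℝ)}ᶜ ∪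
        ⋃ i : ℤ, ⋃ (_ : i ∉ A), ⋂ x : A, {p : X | |evρ i x p - (f x : ℝ)| < 1 / (k + 1)} := by
      ext p
      simp only [Wset, Set.mem_setOf_eq, Set.mem_union, Set.mem_compl_iff, Set.mem_iUnion,
        Set.mem_iInter]
      constructor
      · intro h
        by_cases hd : ∀ x y : A,
            |(f x : ℝ) - (f y : ℝ)| ≤ evρ x y p ∧ evρ x y p ≤ (f x : ℝ) + (f y : ℝ)
        · obtain ⟨i, hi, hb⟩ := h ⟨hc.1, hc.2, hd⟩
          exact Or.inr ⟨i, hi, hb⟩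
        · exact Or.inl hd
      · rintro (hd | ⟨i, hi, hb⟩) ⟨_, _, hD⟩
        · exact absurd hD hd
        · exact ⟨i, hi, hb⟩
    rw [h2]
    refine hQ.isOpen_compl.union ?_
    exact isOpen_iUnion fun i => isOpen_iUnion fun _ => isOpen_iInter_of_finite fun x =>
      isOpen_lt ((continuous_evρ i x).sub continuous_const).abs continuous_const
  · have h3 : Wset A f k = Set.univ := by
      ext p
      simp only [Wset, Set.mem_setOf_eq, Set.mem_univ, iff_true]
      intro h
      exact absurd ⟨h.1, h.2.1⟩ hc
    rw [h3]
    exact isOpen_univ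

end KatetovAux

/-- **Lemma.** The set `U = {(d, ρ) ∈ ℳ × ℳ_ℤ : ρ is a Katetov extension of d}` is a `G_δ`
subset of `ℳ × ℳ_ℤ`. -/
theorem katetovExt_isGδ :
    IsGδ {p : (MetricsOn ℕ) × (MetricsOn ℤ) | IsKatetovExt p.1.val p.2.val} := by
  have hE : IsGδ (⋂ n : ℕ, ⋂ m : ℕ,
      {p : KatetovAux.X | KatetovAux.evρ n m p = p.1.val (n, m)}) := by
    refine .iInter fun n => .iInter fun m => ?_
    have h0 : {p : KatetovAux.X | KatetovAux.evρ n m p = p.1.val (n, m)} =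
        ⋂ j : ℕ, {p : KatetovAux.X | |KatetovAux.evρ n m p - p.1.val (n, m)| < 1 / (j + 1)} := by
      ext p
      simp only [Set.mem_setOf_eq, Set.mem_iInter]
      constructor
      · intro h j
        rw [h]
        simp only [sub_self, abs_zero]
        positivity
      · intro h
        have h2 : |KatetovAux.evρ n m p - p.1.val (n, m)| ≤ 0 := by
          by_contra hcon
          push_neg at hcon
          obtain ⟨j, hj⟩ := exists_nat_one_div_lt hcon
          exact absurd (h j) (not_lt.mpr hj.le)
        have := abs_nonneg (KatetovAux.evρ n m p - p.1.val (n, m))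
        have h3 : |KatetovAux.evρ n m p - p.1.val (n, m)| = 0 := le_antisymm h2 this
        linarith [abs_eq_zero.mp h3, sub_eq_zero.mp (abs_eq_zero.mp h3)]
    rw [h0]
    exact .iInter fun j => (isOpen_lt ((KatetovAux.continuous_evρ n m).sub
      (KatetovAux.continuous_evd n m)).abs continuous_const).isGδ
  have hW : IsGδ (⋂ A : Finset ℤ, ⋂ f : A → ℚ, ⋂ k : ℕ, KatetovAux.Wset A f k) :=
    .iInter fun A => .iInter fun f => .iInter fun k => (KatetovAux.isOpen_Wset A f k).isGδ
  have key : {p : (MetricsOn ℕ) × (MetricsOn ℤ) | IsKatetovExt p.1.val p.2.val} =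
      (⋂ n : ℕ, ⋂ m : ℕ, {p : KatetovAux.X | KatetovAux.evρ n m p = p.1.val (n, m)}) ∩
      (⋂ A : Finset ℤ, ⋂ f : A → ℚ, ⋂ k : ℕ, KatetovAux.Wset A f k) := by
    ext p
    simp only [Set.mem_setOf_eq, Set.mem_inter_iff, Set.mem_iInter]
    constructor
    · rintro ⟨hext, hkat⟩
      refine ⟨fun n m => hext n m, fun A f k ⟨hA, hpos, hd⟩ => ?_⟩
      set r : ℤ → ℝ := fun z => if h : z ∈ A then ((f ⟨z, h⟩ : ℚ) : ℝ) else 0 with hr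
      have hεpos : (0 : ℝ) < 1 / (k + 1) := by positivity
      obtain ⟨i, hi, hb⟩ := hkat A hA (1 / (k + 1)) hεpos r
        (fun x hx => ⟨f ⟨x, hx⟩, hpos _, by simp [hr, hx]⟩)
        (fun x hx y hy => by
          have h := hd ⟨x, hx⟩ ⟨y, hy⟩
          simpa [hr, hx, hy, KatetovAux.evρ] using h)
      refine ⟨i, hi, fun x => ?_⟩
      have h := hb x x.2
      simpa [hr, x.2, KatetovAux.evρ] using h
    · rintro ⟨hEx, hWx⟩
      refine ⟨fun n m => hEx n m, ?_⟩
      intro A hA ε hε r hrat hcomp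
      choose f hfpos hfr using fun x : A => hrat x x.2
      obtain ⟨k, hk⟩ := exists_nat_one_div_lt hε
      obtain ⟨i, hi, hb⟩ := hWx A f k ⟨hA, hfpos, fun x y => by
        have h := hcomp x x.2 y y.2
        rw [hfr x, hfr y] at h
        exact h⟩
      refine ⟨i, hi, fun x hx => ?_⟩
      have h : |p.2.val (i, x) - ((f ⟨x, hx⟩ : ℚ) : ℝ)| < 1 / (k + 1) := hb ⟨x, hx⟩
      rw [show r x = ((f ⟨x, hx⟩ : ℚ) : ℝ) from hfr ⟨x, hx⟩]
      exact h.trans hk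
  rw [key]
  exact hE.inter hW
end

section
/- If d ∈ ℳ and ρ ∈ ℳ_ℤ is a Katetov extension of d, then the metric completion of (ℤ, ρ) is isometrically isomorphic to the Urysohn space (𝕌, δ); that is, the completion is a universal and ultrahomogeneous Polish metric space. -/
open TopologicalSpace

/-- Borel reducibility of equivalence relations on (standard) Borel spaces. -/
def BorelReducible {X : Type*} {Y : Type*} [MeasurableSpace X] [MeasurableSpace Y]
    (E : X → X → Prop) (F : Y → Y → Prop) : Prop :=
  ∃ θ : X → Y, Measurable θ ∧ ∀ x₁ x₂, E x₁ x₂ ↔ F (θ x₁) (θ x₂)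

/-- A Borel action of a Polish group on a standard Borel space. -/
structure PolishGroupAction where
  G : Type
  [grp : Group G]
  [top : TopologicalSpace G]
  [tgrp : IsTopologicalGroup G]
  [pol : PolishSpace G]
  [mG : MeasurableSpace G]
  [bG : BorelSpace G]
  Y : Type
  [mY : MeasurableSpace Y]
  [sbY : StandardBorelSpace Y]
  smul : G → Y → Y
  one_smul : ∀ y, smul 1 y = y
  mul_smul : ∀ g h y, smul (g * h) y = smul g (smul h y)
  measurable_smul : Measurable fun p : G × Y => smul p.1 p.2

attribute [instance] PolishGroupAction.grp PolishGroupAction.top PolishGroupAction.tgrp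
  PolishGroupAction.pol PolishGroupAction.mG PolishGroupAction.bG PolishGroupAction.mY
  PolishGroupAction.sbY

/-- The orbit equivalence relation of a Polish group action. -/
def PolishGroupAction.orbitRel (A : PolishGroupAction) : A.Y → A.Y → Prop :=
  fun y₁ y₂ => ∃ g : A.G, A.smul g y₁ = y₂

/-- An equivalence relation is below a group action if it is Borel reducible to the orbit
equivalence relation of a Borel action of a Polish group on a standard Borel space. -/
def BelowGroupAction {X : Type*} [MeasurableSpace X] (E : X → X → Prop) : Prop :=
  ∃ A : PolishGroupAction, BorelReducible E A.orbitRel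

/-- `U` is (a copy of) the Urysohn metric space: a complete separable metric space which is
universal for separable metric spaces and ultrahomogeneous. -/
def IsUrysohn (U : Type) [MetricSpace U] : Prop :=
  CompleteSpace U ∧ SeparableSpace U ∧
  (∀ (X : Type) [MetricSpace X], SeparableSpace X → ∃ f : X → U, Isometry f) ∧
  (∀ s : Set U, s.Finite → ∀ f : s → U,
      (∀ a b : s, dist (f a) (f b) = dist (a : U) (b : U)) →
      ∃ g : U ≃ᵢ U, ∀ a : s, g (a : U) = f a)

/-- The Effros Borel structure (on the collection of all subsets; its restriction to the closed
subsets is the usual Effros Borel space `F(Z)`). -/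
def effros (Z : Type*) [TopologicalSpace Z] : MeasurableSpace (Set Z) :=
  MeasurableSpace.generateFrom
    {S | ∃ V : Set Z, IsOpen V ∧ S = {F : Set Z | (F ∩ V).Nonempty}}
open Function Filter Topology

/-!
Back and forth. We build an increasing chain of finite partial isometries from `(ℤ, ρ)` into `U`
that exhausts `ℤ` and whose union has dense range. The Urysohn space realizes every positive
Katětov function on a finite subset: the one-point extension embeds into `U` by universality and
is moved back onto the given points by ultrahomogeneity. Forth, this places a new integer `i` at
distances `ρ (i, ·)`. Back, to come within `ε` of `u ∈ U`, approximate the Katětov function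
`dist u (φ ·)` on the current domain by a rational one, let the Katětov property of `ρ` supply an
integer `i` realizing it up to `ε`, and place `i` at distances `ρ (i, ·)` from the image and at
most `ε` from `u`, which is still a Katětov function on the image together with `u`.
-/

section Katetov

variable {α : Type}

def IsKatetovOn (ρ : α × α → ℝ) (A : Finset α) (r : α → ℝ) : Prop :=
  ∀ x ∈ A, ∀ y ∈ A, |r x - r y| ≤ ρ (x, y) ∧ ρ (x, y) ≤ r x + r y

def HasKatetovPoints (ρ : α × α → ℝ) : Prop :=
  ∀ A : Finset α, A.Nonempty → ∀ ε : ℝ, 0 < ε → ∀ r : α → ℝ,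
    (∀ x ∈ A, ∃ q : ℚ, 0 < q ∧ r x = (q : ℝ)) → IsKatetovOn ρ A r →
    ∃ i : α, i ∉ A ∧ ∀ x ∈ A, |ρ (i, x) - r x| < ε

theorem IsKatetovExt.hasKatetovPoints {d : ℕ × ℕ → ℝ} {ρ : ℤ × ℤ → ℝ}
    (h : IsKatetovExt d ρ) : HasKatetovPoints ρ :=
  h.2

variable {ρ : α × α → ℝ} {A : Finset α}

theorem MetricsOn.apply_self (hρ : ρ ∈ MetricsOn α) (a : α) : ρ (a, a) = 0 :=
  (hρ.2.1 a a).2 rfl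

theorem MetricsOn.pos_of_ne (hρ : ρ ∈ MetricsOn α) {a b : α} (h : a ≠ b) : 0 < ρ (a, b) :=
  (hρ.1 a b).lt_of_ne fun h0 => h ((hρ.2.1 a b).1 h0.symm)

theorem MetricsOn.isKatetovOn_apply (hρ : ρ ∈ MetricsOn α) (i : α) (A : Finset α) :
    IsKatetovOn ρ A fun a => ρ (i, a) := by
  obtain ⟨-, -, hsymm, htri⟩ := hρ
  intro a _ b _
  refine ⟨abs_sub_le_iff.2 ⟨?_, ?_⟩, ?_⟩
  · linarith [htri i b a, hsymm b a]
  · linarith [htri i a b]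
  · linarith [htri a i b, hsymm a i]

theorem IsKatetovOn.nonneg (hρ : ρ ∈ MetricsOn α) {r : α → ℝ} (hr : IsKatetovOn ρ A r)
    {a : α} (ha : a ∈ A) : 0 ≤ r a := by
  linarith [(hr a ha a ha).2, hρ.1 a a]

theorem IsKatetovOn.abs_sub_le_add {f g : α → ℝ} (hf : IsKatetovOn ρ A f)
    (hg : IsKatetovOn ρ A g) {a b : α} (ha : a ∈ A) (hb : b ∈ A) : |f a - g a| ≤ f b + g b := by
  have hfab := abs_le.1 (hf a ha b hb).1
  have hgab := abs_le.1 (hg a ha b hb).1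
  exact abs_sub_le_iff.2 ⟨by linarith [(hg a ha b hb).2], by linarith [(hf a ha b hb).2]⟩

theorem IsKatetovOn.exists_rat_near (hρ : ρ ∈ MetricsOn α) {s : α → ℝ}
    (hs : IsKatetovOn ρ A s) {δ : ℝ} (hδ : 0 < δ) :
    ∃ r : α → ℝ, (∀ a ∈ A, ∃ q : ℚ, 0 < q ∧ r a = (q : ℝ)) ∧ IsKatetovOn ρ A r ∧
      ∀ a ∈ A, |r a - s a| ≤ δ := by
  have hs0 : ∀ a ∈ A, 0 ≤ s a := fun a ha => hs.nonneg hρ ha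
  set c := δ / 2 with hc_def
  have hc : 0 < c := half_pos hδ
  have hsum : 0 ≤ ∑ a ∈ A, s a := Finset.sum_nonneg hs0
  set θ := c / (c + ∑ a ∈ A, s a)
  have hθ : 0 < θ := by positivity
  have hθ1 : θ ≤ 1 := div_le_one_of_le₀ (by linarith) (by positivity)
  have hθs : ∀ a ∈ A, θ * s a ≤ c := fun a ha =>
    calc θ * s a ≤ θ * (c + ∑ a ∈ A, s a) :=
          mul_le_mul_of_nonneg_left (by linarith [Finset.single_le_sum hs0 ha]) hθ.le
      _ = c := div_mul_cancel₀ _ (by positivity)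
  obtain ⟨η, ⟨hηc, hηρ⟩, hη⟩ : ∃ η : ℝ,
      (η ≤ c ∧ ∀ a ∈ A, ∀ b ∈ A, a ≠ b → η ≤ θ * ρ (a, b)) ∧ 0 < η := by
    refine (Eventually.and ?_ self_mem_nhdsWithin).exists (f := 𝓝[>] (0 : ℝ))
    refine nhdsWithin_le_nhds ((eventually_le_nhds hc).and ?_)
    refine (eventually_all_finset A).2 fun a _ => (eventually_all_finset A).2 fun b _ => ?_
    by_cases hab : a = b
    · exact Eventually.of_forall fun _ h => absurd hab h
    · have hpos := mul_pos hθ (MetricsOn.pos_of_ne hρ hab)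
      filter_upwards [eventually_le_nhds hpos] with η h _ using h
  -- Shrinking `s` to `(1 - θ) • s + c` creates slack `θ * ρ (a, b)` in the first Katětov
  -- inequality and keeps the second, so rational values within `η` of it still work.
  choose q hq₁ hq₂ using fun a =>
    exists_rat_btwn (lt_add_of_pos_right ((1 - θ) * s a + c) hη)
  have hθs0 : ∀ a ∈ A, 0 ≤ θ * s a := fun a ha => mul_nonneg hθ.le (hs0 a ha)
  refine ⟨fun a => q a, fun a ha => ⟨q a, ?_, rfl⟩, fun a ha b hb => ⟨?_, ?_⟩, fun a ha => ?_⟩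
  · have : (0 : ℝ) < q a := by linarith [hq₁ a, hθs a ha, hs0 a ha]
    exact_mod_cast this
  · rcases eq_or_ne a b with rfl | hab
    · simp [MetricsOn.apply_self hρ]
    have hab' := abs_le.1 (hs a ha b hb).1
    have h₁ := mul_le_mul_of_nonneg_left hab'.1 (sub_nonneg.2 hθ1)
    have h₂ := mul_le_mul_of_nonneg_left hab'.2 (sub_nonneg.2 hθ1)
    have h₃ := hηρ a ha b hb hab
    exact abs_sub_le_iff.2 ⟨by linarith [hq₁ b, hq₂ a], by linarith [hq₁ a, hq₂ b]⟩
  · linarith [(hs a ha b hb).2, hq₁ a, hq₁ b, hθs a ha, hθs b hb]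
  · exact abs_le.2
      ⟨by linarith [hq₁ a, hθs a ha], by linarith [hq₂ a, hθs0 a ha, hc_def]⟩

end Katetov

theorem exists_monotone_seq_of_forall_exists_le {β : Type*} [Preorder β] (b : β)
    (P : ℕ → β → Prop) (h : ∀ n b, ∃ c, b ≤ c ∧ P n c) :
    ∃ s : ℕ → β, Monotone s ∧ ∀ n, P n (s (n + 1)) := by
  choose g hg using h
  let s : ℕ → β := fun n => Nat.rec b (fun n c => g n c) n
  exact ⟨s, monotone_nat_of_le_succ fun n => (hg n (s n)).1, fun n => (hg n (s n)).2⟩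

theorem DenseRange.of_forall_exists_dist_lt {X ι κ : Type*} [PseudoMetricSpace X] {v : ι → X}
    (hv : DenseRange v) {f : κ → X} (h : ∀ i, ∀ ε > 0, ∃ j, dist (v i) (f j) < ε) :
    DenseRange f :=
  dense_closure.1 <| hv.mono <| Set.range_subset_iff.2 fun i => Metric.mem_closure_range_iff.2 (h i)

section Urysohn

variable {U : Type} [MetricSpace U] {ι : Type}

theorem IsUrysohn.nonempty (hU : IsUrysohn U) : Nonempty U :=
  let ⟨f, _⟩ := hU.2.2.1 PUnit inferInstance
  ⟨f PUnit.unit⟩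

theorem IsUrysohn.exists_isometryEquiv_comp_eq [Finite ι] (hU : IsUrysohn U) {e₁ e₂ : ι → U}
    (he₁ : Injective e₁) (h : ∀ i j, dist (e₂ i) (e₂ j) = dist (e₁ i) (e₁ j)) :
    ∃ g : U ≃ᵢ U, ∀ i, g (e₁ i) = e₂ i := by
  let E := Equiv.ofInjective e₁ he₁
  obtain ⟨g, hg⟩ := hU.2.2.2 (Set.range e₁) (Set.finite_range e₁) (fun y => e₂ (E.symm y))
    fun y z => by
      rw [h, Equiv.apply_ofInjective_symm he₁, Equiv.apply_ofInjective_symm he₁]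
  exact ⟨g, fun i => by rw [hg ⟨e₁ i, i, rfl⟩, Equiv.ofInjective_symm_apply]⟩

noncomputable def katetovExtDist (x : ι → U) (h : ι → ℝ) : Option ι → Option ι → ℝ
  | none, none => 0
  | none, some i | some i, none => h i
  | some i, some j => dist (x i) (x j)

noncomputable abbrev katetovExtMetricSpace {x : ι → U} (hx : Injective x) {h : ι → ℝ}
    (hpos : ∀ i, 0 < h i)
    (hkat : ∀ i j, |h i - h j| ≤ dist (x i) (x j) ∧ dist (x i) (x j) ≤ h i + h j) :
    MetricSpace (Option ι) where
  dist := katetovExtDist x h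
  dist_self := by rintro (_ | i) <;> simp [katetovExtDist]
  dist_comm := by rintro (_ | i) (_ | j) <;> simp [katetovExtDist, dist_comm]
  dist_triangle := by
    rintro (_ | i) (_ | j) (_ | k) <;> simp only [katetovExtDist]
    · norm_num
    · linarith
    · linarith [hpos j]
    · linarith [(abs_le.1 (hkat j k).1).1]
    · linarith
    · exact (hkat i k).2
    · linarith [(abs_le.1 (hkat i j).1).2]
    · exact dist_triangle _ _ _
  eq_of_dist_eq_zero := by
    rintro (_ | i) (_ | j) h0 <;> simp only [katetovExtDist] at h0
    · rfl
    · exact absurd h0 (hpos j).ne'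
    · exact absurd h0 (hpos i).ne'
    · exact congrArg some (hx (dist_eq_zero.1 h0))

theorem IsUrysohn.exists_dist_eq [Finite ι] (hU : IsUrysohn U) {x : ι → U} (hx : Injective x)
    {h : ι → ℝ} (hpos : ∀ i, 0 < h i)
    (hkat : ∀ i j, |h i - h j| ≤ dist (x i) (x j) ∧ dist (x i) (x j) ≤ h i + h j) :
    ∃ y, ∀ i, dist y (x i) = h i := by
  let := katetovExtMetricSpace hx hpos hkat
  obtain ⟨F, hF⟩ := hU.2.2.1 (Option ι) inferInstance
  obtain ⟨g, hg⟩ := hU.exists_isometryEquiv_comp_eq (hF.injective.comp (Option.some_injective ι))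
    (e₂ := x) fun i j => (hF.dist_eq (some i) (some j)).symm
  exact ⟨g (F none), fun i => by rw [← hg i, g.dist_eq, comp_apply, hF.dist_eq]; rfl⟩

theorem IsUrysohn.exists_dist_eq_of_notMem_range [Finite ι] (hU : IsUrysohn U) {x : ι → U}
    (hx : Injective x) {u : U} (hu : u ∉ Set.range x) {h : ι → ℝ} (hpos : ∀ i, 0 < h i)
    (hkat : ∀ i j, |h i - h j| ≤ dist (x i) (x j) ∧ dist (x i) (x j) ≤ h i + h j)
    {t : ℝ} (ht : 0 < t) (hut : ∀ i, |t - h i| ≤ dist u (x i) ∧ dist u (x i) ≤ t + h i) :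
    ∃ y, (∀ i, dist y (x i) = h i) ∧ dist y u = t := by
  obtain ⟨y, hy⟩ := hU.exists_dist_eq (x := fun o : Option ι => o.elim u x)
    (h := fun o => o.elim t h)
    (by
      rintro (_ | i) (_ | j) hij
      · rfl
      · exact absurd ⟨j, hij.symm⟩ hu
      · exact absurd ⟨i, hij⟩ hu
      · exact congrArg some (hx hij))
    (by rintro (_ | i); exacts [ht, hpos i])
    (by
      rintro (_ | i) (_ | j)
      · simp only [Option.elim, sub_self, abs_zero, dist_self]
        exact ⟨le_rfl, by linarith⟩
      · exact hut j
      · rw [abs_sub_comm, dist_comm, add_comm]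
        exact hut i
      · exact hkat i j)
  exact ⟨y, fun i => hy (some i), hy none⟩

end Urysohn

structure FinitePartialIsometry {α : Type} (ρ : α × α → ℝ) (U : Type) [MetricSpace U] where
  dom : Finset α
  toFun : α → U
  dist_eq : ∀ a ∈ dom, ∀ b ∈ dom, dist (toFun a) (toFun b) = ρ (a, b)

namespace FinitePartialIsometry

variable {α : Type} {ρ : α × α → ℝ} {U : Type} [MetricSpace U]

instance : Preorder (FinitePartialIsometry ρ U) where
  le p q := p.dom ⊆ q.dom ∧ ∀ a ∈ p.dom, q.toFun a = p.toFun a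
  le_refl _ := ⟨subset_rfl, fun _ _ => rfl⟩
  le_trans _ _ _ hpq hqr :=
    ⟨hpq.1.trans hqr.1, fun a ha => (hqr.2 a (hpq.1 ha)).trans (hpq.2 a ha)⟩

instance [Nonempty U] : Nonempty (FinitePartialIsometry ρ U) :=
  ⟨⟨∅, fun _ => Classical.arbitrary U, by simp⟩⟩

variable (p : FinitePartialIsometry ρ U)

theorem injOn (hρ : ρ ∈ MetricsOn α) : Set.InjOn p.toFun p.dom := fun a ha b hb hab =>
  (hρ.2.1 a b).1 (by rw [← p.dist_eq a ha b hb, hab, dist_self])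

theorem isKatetovOn_dist (u : U) : IsKatetovOn ρ p.dom fun a => dist u (p.toFun a) := by
  intro a ha b hb
  rw [← p.dist_eq a ha b hb]
  refine ⟨?_, ?_⟩
  · simpa only [dist_comm u] using abs_dist_sub_le (p.toFun a) (p.toFun b) u
  · exact (dist_triangle _ u _).trans_eq (by rw [dist_comm])

theorem exists_le_mem_eq (hρ : ρ ∈ MetricsOn α) {i : α} (hi : i ∉ p.dom) {y : U}
    (hy : ∀ a ∈ p.dom, dist y (p.toFun a) = ρ (i, a)) :
    ∃ q : FinitePartialIsometry ρ U, p ≤ q ∧ i ∈ q.dom ∧ q.toFun i = y := by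
  classical
  have hne : ∀ a ∈ p.dom, a ≠ i := fun a ha => ne_of_mem_of_not_mem ha hi
  refine ⟨⟨insert i p.dom, update p.toFun i y, ?_⟩,
    ⟨Finset.subset_insert _ _, fun a ha => update_of_ne (hne a ha) _ _⟩,
    Finset.mem_insert_self _ _, update_self i y p.toFun⟩
  simp only [Finset.mem_insert]
  rintro a (rfl | ha) b (rfl | hb)
  · rw [dist_self, MetricsOn.apply_self hρ]
  · rw [update_self, update_of_ne (hne b hb), hy b hb]
  · rw [update_self, update_of_ne (hne a ha), dist_comm, hy a ha, hρ.2.2.1]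
  · rw [update_of_ne (hne a ha), update_of_ne (hne b hb), p.dist_eq a ha b hb]

theorem injective_toFun_val (hρ : ρ ∈ MetricsOn α) : Injective fun a : p.dom => p.toFun a :=
  fun a b hab => Subtype.ext (p.injOn hρ a.2 b.2 hab)

theorem isKatetov_apply (hρ : ρ ∈ MetricsOn α) (i : α) (a b : p.dom) :
    |ρ (i, a) - ρ (i, b)| ≤ dist (p.toFun a) (p.toFun b) ∧
      dist (p.toFun a) (p.toFun b) ≤ ρ (i, a) + ρ (i, b) := by
  rw [p.dist_eq a a.2 b b.2]
  exact MetricsOn.isKatetovOn_apply hρ i p.dom a a.2 b b.2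

theorem exists_le_mem (hU : IsUrysohn U) (hρ : ρ ∈ MetricsOn α) (i : α) :
    ∃ q : FinitePartialIsometry ρ U, p ≤ q ∧ i ∈ q.dom := by
  by_cases hi : i ∈ p.dom
  · exact ⟨p, le_rfl, hi⟩
  obtain ⟨y, hy⟩ := hU.exists_dist_eq (p.injective_toFun_val hρ) (h := fun a => ρ (i, a))
    (fun a => MetricsOn.pos_of_ne hρ (ne_of_mem_of_not_mem a.2 hi).symm)
    (p.isKatetov_apply hρ i)
  obtain ⟨q, hpq, hiq, -⟩ := p.exists_le_mem_eq hρ hi fun a ha => hy ⟨a, ha⟩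
  exact ⟨q, hpq, hiq⟩

theorem exists_dist_eq_dist_le (hU : IsUrysohn U) (hρ : ρ ∈ MetricsOn α) (hp : p.dom.Nonempty)
    {i : α} (hi : i ∉ p.dom) {u : U} (hu : ∀ a ∈ p.dom, p.toFun a ≠ u) {ε : ℝ} (hε : 0 < ε)
    (hclose : ∀ a ∈ p.dom, |ρ (i, a) - dist u (p.toFun a)| ≤ ε) :
    ∃ y, (∀ a ∈ p.dom, dist y (p.toFun a) = ρ (i, a)) ∧ dist y u ≤ ε := by
  have hρpos : ∀ a ∈ p.dom, 0 < ρ (i, a) := fun a ha =>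
    MetricsOn.pos_of_ne hρ (ne_of_mem_of_not_mem ha hi).symm
  -- the Katětov inequalities at `(u, p a)` ask for `t` between `|ρ (i, a) - dist u (p a)|`
  -- and `ρ (i, a) + dist u (p a)`, for every `a`
  set t := min ε (p.dom.inf' hp fun a => ρ (i, a) + dist u (p.toFun a))
  have ht : 0 < t := lt_min hε <| (Finset.lt_inf'_iff _).2 fun a ha =>
    add_pos_of_pos_of_nonneg (hρpos a ha) dist_nonneg
  have hut : ∀ a : p.dom,
      |t - ρ (i, a)| ≤ dist u (p.toFun a) ∧ dist u (p.toFun a) ≤ t + ρ (i, a) := by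
    rintro ⟨a, ha⟩
    have hlow : |ρ (i, a) - dist u (p.toFun a)| ≤ t := le_min (hclose a ha) <|
      (Finset.le_inf'_iff _ _).2 fun b hb =>
        (MetricsOn.isKatetovOn_apply hρ i p.dom).abs_sub_le_add (p.isKatetovOn_dist u) ha hb
    have hup : t ≤ ρ (i, a) + dist u (p.toFun a) :=
      (min_le_right _ _).trans (Finset.inf'_le _ ha)
    have := abs_le.1 hlow
    exact ⟨abs_sub_le_iff.2 ⟨by linarith, by linarith⟩, by linarith⟩
  obtain ⟨y, hy, hyu⟩ := hU.exists_dist_eq_of_notMem_range (p.injective_toFun_val hρ)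
    (by rintro ⟨a, rfl⟩; exact hu a a.2 rfl) (h := fun a => ρ (i, a))
    (fun a => hρpos a a.2) (p.isKatetov_apply hρ i) ht hut
  exact ⟨y, fun a ha => hy ⟨a, ha⟩, hyu.trans_le (min_le_left _ _)⟩

theorem exists_le_dist_lt (hU : IsUrysohn U) (hρ : ρ ∈ MetricsOn α) (hK : HasKatetovPoints ρ)
    (hp : p.dom.Nonempty) (u : U) {ε : ℝ} (hε : 0 < ε) :
    ∃ q : FinitePartialIsometry ρ U, p ≤ q ∧ ∃ j ∈ q.dom, dist u (q.toFun j) < ε := by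
  by_cases hu : ∃ a ∈ p.dom, p.toFun a = u
  · obtain ⟨a, ha, rfl⟩ := hu
    exact ⟨p, le_rfl, a, ha, by rwa [dist_self]⟩
  push Not at hu
  obtain ⟨r, hrat, hrK, hrs⟩ :=
    (p.isKatetovOn_dist u).exists_rat_near hρ (δ := ε / 4) (by positivity)
  obtain ⟨i, hi, hir⟩ := hK p.dom hp (ε / 4) (by positivity) r hrat hrK
  obtain ⟨y, hy, hyu⟩ := p.exists_dist_eq_dist_le hU hρ hp hi hu (ε := ε / 2) (by positivity)
    fun a ha => by
      linarith [abs_sub_le (ρ (i, a)) (r a) (dist u (p.toFun a)), hir a ha, hrs a ha]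
  obtain ⟨q, hpq, hiq, rfl⟩ := p.exists_le_mem_eq hρ hi hy
  exact ⟨q, hpq, i, hiq, by rw [dist_comm]; linarith⟩

theorem exists_le_mem_dist_lt (hU : IsUrysohn U) (hρ : ρ ∈ MetricsOn α)
    (hK : HasKatetovPoints ρ) (i : α) (u : U) {ε : ℝ} (hε : 0 < ε) :
    ∃ q : FinitePartialIsometry ρ U,
      p ≤ q ∧ i ∈ q.dom ∧ ∃ j ∈ q.dom, dist u (q.toFun j) < ε := by
  obtain ⟨q₁, hpq₁, hi⟩ := p.exists_le_mem hU hρ i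
  obtain ⟨q, hq₁q, hj⟩ := q₁.exists_le_dist_lt hU hρ hK ⟨i, hi⟩ u hε
  exact ⟨q, hpq₁.trans hq₁q, hq₁q.1 hi, hj⟩

theorem exists_forall_dist_eq_of_monotone {s : ℕ → FinitePartialIsometry ρ U} (hs : Monotone s)
    (hcover : ∀ a, ∃ n, a ∈ (s n).dom) :
    ∃ f : α → U, (∀ a b, dist (f a) (f b) = ρ (a, b)) ∧
      ∀ n, ∀ a ∈ (s n).dom, f a = (s n).toFun a := by
  choose N hN using hcover
  have hf : ∀ n, ∀ a ∈ (s n).dom, (s (N a)).toFun a = (s n).toFun a := fun n a ha =>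
    ((hs (le_max_left (N a) n)).2 a (hN a)).symm.trans ((hs (le_max_right (N a) n)).2 a ha)
  refine ⟨fun a => (s (N a)).toFun a, fun a b => ?_, hf⟩
  have ha := (hs (le_max_left (N a) (N b))).1 (hN a)
  have hb := (hs (le_max_right (N a) (N b))).1 (hN b)
  show dist ((s (N a)).toFun a) ((s (N b)).toFun b) = ρ (a, b)
  rw [hf _ a ha, hf _ b hb]
  exact (s _).dist_eq a ha b hb

end FinitePartialIsometry

theorem completion_katetovExt_isUrysohn_general (U : Type) [MetricSpace U] (hU : IsUrysohn U)
    (d : (ℕ × ℕ) → ℝ)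
    (ρ : (ℤ × ℤ) → ℝ) (hρ : ρ ∈ MetricsOn ℤ) (hK : IsKatetovExt d ρ) :
    ∃ f : ℤ → U, (∀ n m : ℤ, dist (f n) (f m) = ρ (n, m)) ∧ DenseRange f := by
  have := hU.nonempty
  have : SeparableSpace U := hU.2.1
  obtain ⟨v, hv⟩ := exists_dense_seq U
  -- stage `k` adds the integer `a` and a point within `1 / (m + 1)` of `v n`, if `e k = (a, n, m)`
  obtain ⟨e, he⟩ := exists_surjective_nat (ℤ × ℕ × ℕ)
  obtain ⟨s, hs, hstep⟩ := exists_monotone_seq_of_forall_exists_le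
    (Classical.arbitrary (FinitePartialIsometry ρ U))
    (fun k q => (e k).1 ∈ q.dom ∧
      ∃ j ∈ q.dom, dist (v (e k).2.1) (q.toFun j) < 1 / ((e k).2.2 + 1))
    fun k p => p.exists_le_mem_dist_lt hU hρ hK.hasKatetovPoints _ _ Nat.one_div_pos_of_nat
  obtain ⟨f, hfρ, hfs⟩ := FinitePartialIsometry.exists_forall_dist_eq_of_monotone hs fun a =>
    let ⟨k, hk⟩ := he (a, 0, 0)
    ⟨k + 1, by simpa only [hk] using (hstep k).1⟩
  refine ⟨f, hfρ, hv.of_forall_exists_dist_lt fun n ε hε => ?_⟩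
  obtain ⟨m, hm⟩ := exists_nat_one_div_lt hε
  obtain ⟨k, hk⟩ := he (0, n, m)
  obtain ⟨j, hj, hdist⟩ := (hstep k).2
  rw [hk] at hdist
  exact ⟨j, by rw [hfs _ j hj]; exact hdist.trans hm⟩

/-- **Lemma.** If `d ∈ ℳ` and `ρ ∈ ℳ_ℤ` is a Katetov extension of `d`, then the metric
completion of `(ℤ, ρ)` is isometrically isomorphic to the Urysohn space `(𝕌, δ)` (the unique
universal and ultrahomogeneous Polish metric space): equivalently, `(ℤ, ρ)` admits a
distance-preserving map onto a dense subset of `𝕌`. -/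
theorem completion_katetovExt_isUrysohn (U : Type) [MetricSpace U] (hU : IsUrysohn U)
    (d : (ℕ × ℕ) → ℝ) (hd : d ∈ MetricsOn ℕ)
    (ρ : (ℤ × ℤ) → ℝ) (hρ : ρ ∈ MetricsOn ℤ) (hK : IsKatetovExt d ρ) :
    ∃ f : ℤ → U, (∀ n m : ℤ, dist (f n) (f m) = ρ (n, m)) ∧ DenseRange f :=
  completion_katetovExt_isUrysohn_general U hU d ρ hρ hK
end

section
/- Let X and Y be Polish spaces, let d_Y be a complete compatible metric on Y, let A ⊆ X × Y be a G_δ set, and let (y_n)_{n∈ℕ} be a dense sequence in Y. Suppose G is a Polish group acting continuously on Y such that A_x is G-invariant for every x ∈ X and every G-orbit of a point y ∈ A_x is dense in A_x. Then the set R = {(x, n, ε) ∈ X × ℕ × ℚ₊ : ∃ y ∈ A_x, d_Y(y, y_n) < ε} is Borel (it is simultaneously analytic and coanalytic), and consequently proj_X(A) is Borel and A admits a Borel uniformization. -/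
/-!
Everything reduces to the Borelness of the hit sets `{x | A_x meets B(y_n, ε)}`: the projection of
`A` is their union, `R` is a countable union of their products with points, and a uniformization is
the limit of a chain of hit balls chosen measurably, ball after ball.

Write `A = ⋂ V k` with `V k` open and record which basic balls `A_x` meets as a code
`φ : ℕ × ℚ → Bool`. The true code is the only `φ` such that (1) some ball is hit; (2) for every `k`,
every hit ball contains a hit ball of radius `< 1/(k+1)` whose closure lies in the sections of `V k`
at all points near `x`; (3) if `φ` hits `B` and `g • B ⊆ B'` for some `g : G`, then `φ` hits `B'`.
By (2) and completeness every ball hit by `φ` contains a point of `A_x`. Conversely, (2) also yields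
a point `z ∈ A_x` inside arbitrarily small hit balls; if a ball `B` meets `A_x`, the orbit of `z`
enters `B`, so some `g` moves a small hit ball around `z` into `B`, and (3) forces `B` to be hit.
The three conditions are Borel in `(x, φ)`, so the set of `x` hitting a given ball is the injective
projection of a Borel set, hence Borel by Lusin–Souslin.
-/

open Set Filter Topology TopologicalSpace MeasureTheory Metric

theorem exists_measurable_choice_of_countable {α β : Type*} [MeasurableSpace α]
    [MeasurableSpace β] [Countable β] [Nonempty β] {P : α → β → Prop}
    (hP : ∀ b, MeasurableSet {a | P a b}) :
    ∃ f : α → β, Measurable f ∧ ∀ a, (∃ b, P a b) → P a (f a) := by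
  classical
  obtain ⟨s, hs⟩ := exists_surjective_nat β
  have hex : ∀ a, ∃ n, P a (s n) ∨ ∀ m, ¬ P a (s m) := fun a => by
    by_cases h : ∃ m, P a (s m)
    · exact h.imp fun _ => Or.inl
    · exact ⟨0, .inr (not_exists.1 h)⟩
  have hmeas : ∀ n, MeasurableSet {a | P a (s n) ∨ ∀ m, ¬ P a (s m)} := fun n =>
    measurableSet_setOfPred.2 <| (measurableSet_setOfPred.1 (hP _)).or <|
      Measurable.forall fun m => (measurableSet_setOfPred.1 (hP _)).not
  refine ⟨fun a => s (Nat.find (hex a)), measurable_from_nat.comp (measurable_find hex hmeas), ?_⟩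
  rintro a ⟨b, hb⟩
  obtain ⟨m, rfl⟩ := hs b
  exact (Nat.find_spec (hex a)).resolve_right fun h => h m hb

theorem analyticSet_of_forall_measurableSet_slice {X T : Type*} [TopologicalSpace X]
    [PolishSpace X] [MeasurableSpace X] [BorelSpace X] [TopologicalSpace T] [Countable T]
    {s : Set (X × T)} (hs : ∀ b, MeasurableSet {x | (x, b) ∈ s}) : AnalyticSet s := by
  have hunion : s = ⋃ b, (fun x => (x, b)) '' {x | (x, b) ∈ s} := by
    ext ⟨x, b⟩
    simp
  rw [hunion]
  exact AnalyticSet.iUnion fun b => (hs b).analyticSet.image_of_continuous (by fun_prop)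

def stepSeq {α : Type*} (a : α) (next : ℕ → α → α) : ℕ → α
  | 0 => a
  | k + 1 => next k (stepSeq a next k)

theorem stepSeq_spec {α : Type*} {p : α → Prop} {r : ℕ → α → α → Prop} {a : α}
    {next : ℕ → α → α} (ha : p a) (hnext : ∀ k b, p b → p (next k b) ∧ r k b (next k b))
    (k : ℕ) : p (stepSeq a next k) ∧ r k (stepSeq a next k) (stepSeq a next (k + 1)) := by
  induction k with
  | zero => exact ⟨ha, (hnext 0 a ha).2⟩
  | succ k ih =>
    have hp := (hnext k _ ih.1).1
    exact ⟨hp, (hnext (k + 1) _ hp).2⟩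

theorem exists_seq_of_forall_exists {α : Type*} {p : α → Prop} {r : ℕ → α → α → Prop}
    (h : ∀ a, p a → ∀ k, ∃ b, p b ∧ r k a b) {a : α} (ha : p a) :
    ∃ c : ℕ → α, c 0 = a ∧ ∀ k, p (c k) ∧ r k (c k) (c (k + 1)) := by
  choose! next hnext using h
  exact ⟨stepSeq a fun k b => next b k, rfl, stepSeq_spec ha fun k b hb => hnext b hb k⟩

theorem DenseRange.exists_closedBall_subset_of_mem_nhds {Y ι : Type*} [PseudoMetricSpace Y]
    {y : ι → Y} (hy : DenseRange y) {z : Y} {W : Set Y} (hW : W ∈ 𝓝 z) {ε : ℝ} (hε : 0 < ε) :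
    ∃ e : ι × ℚ, 0 < (e.2 : ℝ) ∧ (e.2 : ℝ) < ε ∧ z ∈ ball (y e.1) e.2 ∧
      closedBall (y e.1) e.2 ⊆ W := by
  obtain ⟨ρ, hρ, hρW⟩ := Metric.mem_nhds_iff.1 hW
  obtain ⟨q, hq₀, hq⟩ := exists_rat_btwn (lt_min hε (half_pos hρ))
  obtain ⟨m, hm⟩ := hy.exists_dist_lt z hq₀
  refine ⟨(m, q), hq₀, hq.trans_le (min_le_left _ _), hm, ?_⟩
  refine (closedBall_subset_ball' ?_).trans hρW
  have := min_le_right ε (ρ / 2)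
  rw [dist_comm]
  linarith

theorem exists_mapsTo_smul_ball_of_mem_closure_orbit {G Y : Type*} [PseudoMetricSpace Y]
    [SMul G Y] [ContinuousConstSMul G Y] {z w : Y}
    (hw : w ∈ closure (range fun g : G => g • z)) {U : Set Y} (hU : IsOpen U) (hwU : w ∈ U) :
    ∃ ε > 0, ∀ c r, dist z c ≤ r → r < ε → ∃ g : G, MapsTo (g • ·) (ball c r) U := by
  obtain ⟨_, hgU, g, rfl⟩ := mem_closure_iff.1 hw U hU hwU
  obtain ⟨ε, hε, hball⟩ := Metric.isOpen_iff.1 (hU.preimage (continuous_const_smul g)) z hgU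
  refine ⟨ε / 2, half_pos hε, fun c r hzc hr => ⟨g, fun w' hw' => hball ?_⟩⟩
  have := dist_triangle w' c z
  rw [mem_ball] at hw' ⊢
  rw [dist_comm] at hzc
  linarith

namespace HomogeneousSelection

variable {X Y : Type*} [MetricSpace Y]

def hitSet (A : Set (X × Y)) (y : ℕ → Y) (e : ℕ × ℚ) : Set X :=
  {x | ∃ z, (x, z) ∈ A ∧ z ∈ ball (y e.1) e.2}

open Classical in
noncomputable def hitCode (A : Set (X × Y)) (y : ℕ → Y) (x : X) : ℕ × ℚ → Bool :=
  fun e => decide (x ∈ hitSet A y e)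

theorem exists_mem_hitSet_iff {A : Set (X × Y)} {y : ℕ → Y} (hy : DenseRange y) {x : X} :
    (∃ e, x ∈ hitSet A y e) ↔ ∃ z, (x, z) ∈ A := by
  refine ⟨fun ⟨_, z, hz, _⟩ => ⟨z, hz⟩, fun ⟨z, hz⟩ => ?_⟩
  obtain ⟨m, hm⟩ := hy.exists_dist_lt z one_pos
  exact ⟨(m, 1), z, hz, by simpa using hm⟩

theorem hitCode_eq_true {A : Set (X × Y)} {y : ℕ → Y} {x : X} {e : ℕ × ℚ} :
    hitCode A y x e = true ↔ x ∈ hitSet A y e := by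
  simp [hitCode]

variable [TopologicalSpace X]

/-- Required on a neighbourhood of `x` so that `{x | Refines V y x e k e'}` is open. -/
def Refines (V : ℕ → Set (X × Y)) (y : ℕ → Y) (x : X) (e : ℕ × ℚ) (k : ℕ) (e' : ℕ × ℚ) :
    Prop :=
  0 < (e'.2 : ℝ) ∧ (e'.2 : ℝ) < 1 / (k + 1) ∧ closedBall (y e'.1) e'.2 ⊆ ball (y e.1) e.2 ∧
    ∀ᶠ x' in 𝓝 x, ∀ w ∈ closedBall (y e'.1) e'.2, (x', w) ∈ V k

def IsCode (G : Type*) [SMul G Y] (V : ℕ → Set (X × Y)) (y : ℕ → Y) (x : X)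
    (φ : ℕ × ℚ → Bool) : Prop :=
  (∃ e, φ e) ∧ (∀ e, φ e → ∀ k, ∃ e', φ e' ∧ Refines V y x e k e') ∧
    ∀ e e', φ e → (∃ g : G, MapsTo (g • ·) (ball (y e.1) e.2) (ball (y e'.1) e'.2)) → φ e'

variable {V : ℕ → Set (X × Y)} {y : ℕ → Y} {x : X}

theorem exists_mem_hitSet_refines (hV : ∀ k, IsOpen (V k)) (hy : DenseRange y) {e : ℕ × ℚ}
    (hx : x ∈ hitSet (⋂ k, V k) y e) (k : ℕ) :
    ∃ e', x ∈ hitSet (⋂ k, V k) y e' ∧ Refines V y x e k e' := by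
  obtain ⟨z, hz, hze⟩ := hx
  obtain ⟨u, hu, v, hv, huv⟩ :=
    mem_nhds_prod_iff.1 ((hV k).mem_nhds (mem_iInter.1 hz k))
  obtain ⟨e', hpos, hsmall, hze', hsub⟩ := hy.exists_closedBall_subset_of_mem_nhds
    (inter_mem hv (isOpen_ball.mem_nhds hze)) (by positivity : (0 : ℝ) < 1 / (k + 1))
  exact ⟨e', ⟨z, hz, hze'⟩, hpos, hsmall, hsub.trans inter_subset_right,
    eventually_of_mem hu fun x' hx' w hw => huv ⟨hx', (hsub hw).1⟩⟩

theorem exists_mem_iInter_of_refines [CompleteSpace Y] {c : ℕ → ℕ × ℚ}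
    (hc : ∀ k, Refines V y x (c k) k (c (k + 1))) :
    ∃ z, (x, z) ∈ ⋂ k, V k ∧ z ∈ ball (y (c 0).1) (c 0).2 ∧
      (∀ k, z ∈ closedBall (y (c (k + 1)).1) (c (k + 1)).2) ∧
      Tendsto (fun k => y (c k).1) atTop (𝓝 z) := by
  set K : ℕ → Set Y := fun k => closedBall (y (c (k + 1)).1) (c (k + 1)).2
  have hK : Antitone K :=
    antitone_nat_of_succ_le fun k => (hc (k + 1)).2.2.1.trans ball_subset_closedBall
  have hradius : Tendsto (fun k : ℕ => (1 : ℝ) / (k + 1)) atTop (𝓝 0) :=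
    tendsto_one_div_add_atTop_nhds_zero_nat
  have hdiam : Tendsto (fun k => diam (K k)) atTop (𝓝 0) := by
    refine squeeze_zero (fun _ => diam_nonneg) (fun k => ?_)
      (by simpa using hradius.const_mul 2 : Tendsto (fun k : ℕ => 2 * (1 / ((k : ℝ) + 1))) _ _)
    have hsmall := (hc k).2.1
    exact (diam_closedBall (hc k).1.le).trans (by linarith)
  obtain ⟨z, hz⟩ := nonempty_iInter_of_nonempty_biInter (fun _ => isClosed_closedBall)
    (fun _ => isBounded_closedBall)
    (fun N => ⟨_, mem_iInter₂.2 fun _ hn => hK hn (mem_closedBall_self (hc N).1.le)⟩) hdiam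
  rw [mem_iInter] at hz
  refine ⟨z, mem_iInter.2 fun k => (hc k).2.2.2.self_of_nhds z (hz k), (hc 0).2.2.1 (hz 0),
    hz, ?_⟩
  rw [← tendsto_add_atTop_iff_nat 1, tendsto_iff_dist_tendsto_zero]
  refine squeeze_zero (fun _ => dist_nonneg) (fun k => ?_) hradius
  rw [dist_comm]
  exact (mem_closedBall.1 (hz k)).trans (hc k).2.1.le

section Group

variable {G : Type*} [Group G] [MulAction G Y]

theorem isCode_hitCode (hV : ∀ k, IsOpen (V k)) (hy : DenseRange y)
    (hInv : ∀ (x : X) (g : G) (z : Y), (x, z) ∈ ⋂ k, V k → (x, g • z) ∈ ⋂ k, V k)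
    (hx : ∃ z, (x, z) ∈ ⋂ k, V k) : IsCode G V y x (hitCode (⋂ k, V k) y x) := by
  refine ⟨?_, fun e he k => ?_, fun e e' he ⟨g, hg⟩ => ?_⟩
  · simpa only [hitCode_eq_true] using (exists_mem_hitSet_iff hy).2 hx
  · simpa only [hitCode_eq_true] using exists_mem_hitSet_refines hV hy (hitCode_eq_true.1 he) k
  · obtain ⟨z, hz, hze⟩ := hitCode_eq_true.1 he
    exact hitCode_eq_true.2 ⟨g • z, hInv x g z hz, hg hze⟩

theorem IsCode.eq_hitCode [CompleteSpace Y] [TopologicalSpace G] [ContinuousConstSMul G Y]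
    (hDense : ∀ (x : X) (z w : Y), (x, z) ∈ ⋂ k, V k → (x, w) ∈ ⋂ k, V k →
      w ∈ closure (range fun g : G => g • z))
    {φ : ℕ × ℚ → Bool} (hφ : IsCode G V y x φ) : φ = hitCode (⋂ k, V k) y x := by
  obtain ⟨⟨e₀, he₀⟩, hrefine, htransfer⟩ := hφ
  funext e
  rw [Bool.eq_iff_iff, hitCode_eq_true]
  constructor
  · intro he
    obtain ⟨c, rfl, hc⟩ := exists_seq_of_forall_exists hrefine he
    obtain ⟨z, hz, hzc, -⟩ := exists_mem_iInter_of_refines fun k => (hc k).2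
    exact ⟨z, hz, hzc⟩
  · rintro ⟨w, hw, hwe⟩
    obtain ⟨c, -, hc⟩ := exists_seq_of_forall_exists hrefine he₀
    obtain ⟨z, hz, -, hzc, -⟩ := exists_mem_iInter_of_refines fun k => (hc k).2
    obtain ⟨ε, hε, hmaps⟩ :=
      exists_mapsTo_smul_ball_of_mem_closure_orbit (hDense x z w hz hw) isOpen_ball hwe
    obtain ⟨k, hk⟩ := exists_nat_one_div_lt hε
    exact htransfer _ e (hc (k + 1)).1 (hmaps _ _ (hzc k) ((hc k).2.2.1.trans hk))

theorem measurable_refines [MeasurableSpace X] [OpensMeasurableSpace X] (e : ℕ × ℚ) (k : ℕ)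
    (e' : ℕ × ℚ) : Measurable fun x => Refines V y x e k e' :=
  measurable_const.and <| measurable_const.and <| measurable_const.and <|
    measurableSet_setOfPred.1 isOpen_setOfPred_eventually_nhds.measurableSet

theorem measurable_isCode [MeasurableSpace X] [OpensMeasurableSpace X] :
    Measurable fun p : X × (ℕ × ℚ → Bool) => IsCode G V y p.1 p.2 := by
  have hφ : ∀ e, Measurable fun p : X × (ℕ × ℚ → Bool) => p.2 e = true := fun e => by
    fun_prop
  refine (Measurable.exists hφ).and ((Measurable.forall fun e => (hφ e).imp ?_).and ?_)
  · exact Measurable.forall fun k => Measurable.exists fun e' =>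
      (hφ e').and ((measurable_refines e k e').comp measurable_fst)
  · exact Measurable.forall fun e => Measurable.forall fun e' =>
      (hφ e).imp (measurable_const.imp (hφ e'))

theorem measurableSet_hitSet [PolishSpace X] [MeasurableSpace X] [BorelSpace X] [CompleteSpace Y]
    [TopologicalSpace G] [ContinuousConstSMul G Y] (hV : ∀ k, IsOpen (V k)) (hy : DenseRange y)
    (hInv : ∀ (x : X) (g : G) (z : Y), (x, z) ∈ ⋂ k, V k → (x, g • z) ∈ ⋂ k, V k)
    (hDense : ∀ (x : X) (z w : Y), (x, z) ∈ ⋂ k, V k → (x, w) ∈ ⋂ k, V k →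
      w ∈ closure (range fun g : G => g • z))
    (e : ℕ × ℚ) : MeasurableSet (hitSet (⋂ k, V k) y e) := by
  have himage : hitSet (⋂ k, V k) y e =
      Prod.fst '' {p : X × (ℕ × ℚ → Bool) | IsCode G V y p.1 p.2 ∧ p.2 e = true} := by
    ext x
    constructor
    · intro hx
      have hcode := isCode_hitCode hV hy hInv ((exists_mem_hitSet_iff hy).1 ⟨e, hx⟩)
      exact ⟨(x, hitCode _ y x), ⟨hcode, hitCode_eq_true.2 hx⟩, rfl⟩
    · rintro ⟨⟨x, φ⟩, ⟨hφ, he⟩, rfl⟩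
      rw [hφ.eq_hitCode hDense] at he
      exact hitCode_eq_true.1 he
  -- instance search does not find `PolishSpace (X × (ℕ × ℚ → Bool))` without this hint
  have : IsCompletelyMetrizableSpace (ℕ × ℚ → Bool) := inferInstance
  rw [himage]
  refine .image_of_continuousOn_injOn
    (measurableSet_setOfPred.2 (measurable_isCode.and (by fun_prop))) continuous_fst.continuousOn ?_
  rintro ⟨x, φ⟩ ⟨hφ, -⟩ ⟨x', φ'⟩ ⟨hφ', -⟩ (rfl : x = x')
  exact congrArg (Prod.mk x) ((hφ.eq_hitCode hDense).trans (hφ'.eq_hitCode hDense).symm)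

theorem exists_measurable_uniformization [PolishSpace X] [MeasurableSpace X] [BorelSpace X]
    [CompleteSpace Y] [MeasurableSpace Y] [BorelSpace Y] [TopologicalSpace G]
    [ContinuousConstSMul G Y] (hV : ∀ k, IsOpen (V k)) (hy : DenseRange y)
    (hInv : ∀ (x : X) (g : G) (z : Y), (x, z) ∈ ⋂ k, V k → (x, g • z) ∈ ⋂ k, V k)
    (hDense : ∀ (x : X) (z w : Y), (x, z) ∈ ⋂ k, V k → (x, w) ∈ ⋂ k, V k →
      w ∈ closure (range fun g : G => g • z)) :
    ∃ f : {x : X | ∃ z : Y, (x, z) ∈ ⋂ k, V k} → Y,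
      Measurable f ∧ ∀ x : {x : X | ∃ z : Y, (x, z) ∈ ⋂ k, V k}, ((x : X), f x) ∈ ⋂ k, V k := by
  have hS := measurableSet_hitSet hV hy hInv hDense
  obtain ⟨seed, hseed_meas, hseed⟩ := exists_measurable_choice_of_countable hS
  choose next hnext_meas hnext using fun k e => exists_measurable_choice_of_countable
    (P := fun x e' => x ∈ hitSet (⋂ k, V k) y e' ∧ Refines V y x e k e')
    fun e' => (hS e').inter (measurableSet_setOfPred.2 (measurable_refines e k e'))
  set c : X → ℕ → ℕ × ℚ := fun x => stepSeq (seed x) fun k e => next k e x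
  have hc_meas : ∀ k, Measurable fun x => c x k := by
    intro k
    induction k with
    | zero => exact hseed_meas
    | succ k ih =>
      have hnext_meas' : Measurable fun p : X × (ℕ × ℚ) => next k p.2 p.1 :=
        measurable_from_prod_countable_left (hnext_meas k)
      exact hnext_meas'.comp (measurable_id.prodMk ih)
  have hconv : ∀ x : {x : X | ∃ z : Y, (x, z) ∈ ⋂ k, V k}, ∃ z, ((x : X), z) ∈ ⋂ k, V k ∧
      Tendsto (fun k => y (c x k).1) atTop (𝓝 z) := by
    rintro ⟨x, hx⟩
    have hchain := stepSeq_spec (p := fun e => x ∈ hitSet (⋂ k, V k) y e)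
      (r := fun k e e' => Refines V y x e k e') (hseed x ((exists_mem_hitSet_iff hy).2 hx))
      fun k e he => hnext k e x (exists_mem_hitSet_refines hV hy he k)
    obtain ⟨z, hz, -, -, hlim⟩ := exists_mem_iInter_of_refines fun k => (hchain k).2
    exact ⟨z, hz, hlim⟩
  choose f hf hlim using hconv
  refine ⟨f, measurable_of_tendsto_metrizable' atTop (fun k => ?_) (tendsto_pi_nhds.2 hlim), hf⟩
  exact (measurable_from_nat.comp (measurable_fst.comp (hc_meas k))).comp measurable_subtype_coe

end Group

end HomogeneousSelection

open HomogeneousSelection in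
theorem gdelta_borel_uniformization_of_group_general
    (X Y G : Type) [TopologicalSpace X] [PolishSpace X] [MeasurableSpace X] [BorelSpace X]
    [MetricSpace Y] [CompleteSpace Y] [MeasurableSpace Y] [BorelSpace Y]
    [Group G] [TopologicalSpace G]
    [MulAction G Y] [ContinuousSMul G Y]
    (A : Set (X × Y)) (hA : IsGδ A)
    (hInv : ∀ (x : X) (g : G) (z : Y), (x, z) ∈ A → (x, g • z) ∈ A)
    (hDense : ∀ (x : X) (z w : Y), (x, z) ∈ A → (x, w) ∈ A →
      w ∈ closure (Set.range fun g : G => g • z))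
    (y : ℕ → Y) (hy : DenseRange y)
    (R : Set (X × ℕ × ℚ))
    (hR : R = {p : X × ℕ × ℚ | 0 < p.2.2 ∧ ∃ z : Y, (p.1, z) ∈ A ∧ dist z (y p.2.1) < (p.2.2 : ℝ)}) :
    MeasureTheory.AnalyticSet R ∧ MeasureTheory.AnalyticSet Rᶜ ∧ MeasurableSet R ∧
    MeasurableSet {x : X | ∃ z : Y, (x, z) ∈ A} ∧
    ∃ f : {x : X | ∃ z : Y, (x, z) ∈ A} → Y,
      Measurable f ∧ ∀ x : {x : X | ∃ z : Y, (x, z) ∈ A}, ((x : X), f x) ∈ A := by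
  obtain ⟨V, hV, rfl⟩ := isGδ_iff_eq_iInter_nat.1 hA
  have hS := measurableSet_hitSet hV hy hInv hDense
  have hslice : ∀ b : ℕ × ℚ, MeasurableSet {x | (x, b) ∈ R} := fun b =>
    hR ▸ (MeasurableSet.const (0 < b.2)).inter (hS b)
  refine ⟨analyticSet_of_forall_measurableSet_slice hslice,
    analyticSet_of_forall_measurableSet_slice fun b => (hslice b).compl,
    measurableSet_setOfPred.2 (measurable_from_prod_countable_left fun b =>
      measurableSet_setOfPred.1 (hslice b)), ?_, exists_measurable_uniformization hV hy hInv hDense⟩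
  have hproj : {x : X | ∃ z : Y, (x, z) ∈ ⋂ k, V k} = ⋃ e, hitSet (⋂ k, V k) y e := by
    ext x
    rw [mem_iUnion, exists_mem_hitSet_iff hy]
    rfl
  exact hproj ▸ MeasurableSet.iUnion hS

/-- **Theorem (homogeneous selection principle, part 2).** Let `X, Y` be Polish spaces with a
complete compatible metric `d_Y` on `Y`, let `A ⊆ X × Y` be `G_δ`, and let `(y_n)` be dense in
`Y`.  Suppose the Polish group `G` acts continuously on `Y` so that each section `A_x` is
`G`-invariant and every `G`-orbit of a point of `A_x` is dense in `A_x`.  Then the set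
`R = {(x, n, ε) ∈ X × ℕ × ℚ₊ : ∃ y ∈ A_x, d_Y(y, y_n) < ε}` is Borel (being simultaneously
analytic and coanalytic), and consequently `proj_X(A)` is Borel and `A` admits a Borel
uniformization. -/
theorem gdelta_borel_uniformization_of_group
    (X Y G : Type) [TopologicalSpace X] [PolishSpace X] [MeasurableSpace X] [BorelSpace X]
    [MetricSpace Y] [CompleteSpace Y] [SeparableSpace Y] [MeasurableSpace Y] [BorelSpace Y]
    [Group G] [TopologicalSpace G] [IsTopologicalGroup G] [PolishSpace G]
    [MulAction G Y] [ContinuousSMul G Y]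
    (A : Set (X × Y)) (hA : IsGδ A)
    (hInv : ∀ (x : X) (g : G) (z : Y), (x, z) ∈ A → (x, g • z) ∈ A)
    (hDense : ∀ (x : X) (z w : Y), (x, z) ∈ A → (x, w) ∈ A →
      w ∈ closure (Set.range fun g : G => g • z))
    (y : ℕ → Y) (hy : DenseRange y)
    (R : Set (X × ℕ × ℚ))
    (hR : R = {p : X × ℕ × ℚ | 0 < p.2.2 ∧ ∃ z : Y, (p.1, z) ∈ A ∧ dist z (y p.2.1) < (p.2.2 : ℝ)}) :
    MeasureTheory.AnalyticSet R ∧ MeasureTheory.AnalyticSet Rᶜ ∧ MeasurableSet R ∧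
    MeasurableSet {x : X | ∃ z : Y, (x, z) ∈ A} ∧
    ∃ f : {x : X | ∃ z : Y, (x, z) ∈ A} → Y,
      Measurable f ∧ ∀ x : {x : X | ∃ z : Y, (x, z) ∈ A}, ((x : X), f x) ∈ A :=
  gdelta_borel_uniformization_of_group_general X Y G A hA hInv hDense y hy R hR
end

section
/- For Polish metric spaces (X, d_X) and (Y, d_Y), the set UC(X,Y) of uniformly continuous functions f : X → Y, where each f is identified with its graph graph(f) ⊆ X × Y (a closed subset of X × Y), is a Borel subset of the Effros Borel space F(X × Y). -/
open TopologicalSpace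

/-- The Effros Borel space `F(Z)` of closed subsets of a Polish space `Z`, with the σ-algebra
generated by the sets `{F : F ∩ V ≠ ∅}` for `V ⊆ Z` open. -/
def EffrosSpace (Z : Type) [TopologicalSpace Z] : Type :=
  {C : Set Z // IsClosed C}

instance (Z : Type) [TopologicalSpace Z] : MeasurableSpace (EffrosSpace Z) :=
  MeasurableSpace.generateFrom
    {S : Set (EffrosSpace Z) | ∃ V : Set Z, IsOpen V ∧ S = {F | ((F.val ∩ V)).Nonempty}}

lemma effros_meas {Z : Type} [TopologicalSpace Z] {V : Set Z} (hV : IsOpen V) :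
    MeasurableSet {F : EffrosSpace Z | (F.val ∩ V).Nonempty} :=
  MeasurableSpace.measurableSet_generateFrom ⟨V, hV, rfl⟩

lemma effros_pair_meas {Z : Type} [TopologicalSpace Z] [SecondCountableTopology Z]
    {W : Set (Z × Z)} (hW : IsOpen W) :
    MeasurableSet {F : EffrosSpace Z | ∃ p ∈ F.val, ∃ q ∈ F.val, (p, q) ∈ W} := by
  obtain ⟨b, hbc, -, hbb⟩ := exists_countable_basis Z
  have heq : {F : EffrosSpace Z | ∃ p ∈ F.val, ∃ q ∈ F.val, (p, q) ∈ W} =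
      ⋃ (u ∈ b) (v ∈ b) (_ : u ×ˢ v ⊆ W),
        ({F : EffrosSpace Z | (F.val ∩ u).Nonempty} ∩ {F | (F.val ∩ v).Nonempty}) := by
    ext F
    simp only [Set.mem_setOf_eq, Set.mem_iUnion, Set.mem_inter_iff, exists_prop]
    constructor
    · rintro ⟨p, hp, q, hq, hpq⟩
      obtain ⟨s, hs, hmem, hsub⟩ := (hbb.prod hbb).exists_subset_of_mem_open hpq hW
      obtain ⟨u, hu, v, hv, rfl⟩ := hs
      exact ⟨u, hu, v, hv, hsub, ⟨p, hp, hmem.1⟩, ⟨q, hq, hmem.2⟩⟩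
    · rintro ⟨u, -, v, -, hsub, ⟨p, hp, hpu⟩, ⟨q, hq, hqv⟩⟩
      exact ⟨p, hp, q, hq, hsub ⟨hpu, hqv⟩⟩
  rw [heq]
  exact MeasurableSet.biUnion hbc fun u hu => MeasurableSet.biUnion hbc fun v hv =>
    MeasurableSet.iUnion fun _ =>
      (effros_meas (hbb.isOpen hu)).inter (effros_meas (hbb.isOpen hv))

/-- **Lemma.** For Polish metric spaces `X` and `Y`, the set `UC(X,Y)` of uniformly
continuous functions `f : X → Y`, each identified with its (closed) graph inside `X × Y`, is
a Borel subset of the Effros Borel space `F(X × Y)`. -/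
theorem uniformContinuous_graphs_measurableSet
    (X Y : Type) [MetricSpace X] [CompleteSpace X] [SeparableSpace X]
    [MetricSpace Y] [CompleteSpace Y] [SeparableSpace Y] :
    MeasurableSet {F : EffrosSpace (X × Y) |
      ∃ f : X → Y, UniformContinuous f ∧ F.val = {p : X × Y | p.2 = f p.1}} := by
  haveI : SecondCountableTopology X := UniformSpace.secondCountable_of_separable X
  haveI : SecondCountableTopology Y := UniformSpace.secondCountable_of_separable Y
  obtain ⟨D, hDc, hDd⟩ := TopologicalSpace.exists_countable_dense X
  -- the pair-violation open sets
  set W : ℚ → ℚ → Set ((X × Y) × (X × Y)) := fun ε δ =>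
    {z | dist z.1.1 z.2.1 < (δ : ℝ) ∧ (ε : ℝ) < dist z.1.2 z.2.2} with hWdef
  have hWopen : ∀ ε δ : ℚ, IsOpen (W ε δ) := fun ε δ =>
    ((isOpen_lt ((continuous_fst.fst).dist (continuous_snd.fst)) continuous_const).inter
      (isOpen_lt continuous_const ((continuous_fst.snd).dist (continuous_snd.snd))))
  have key : {F : EffrosSpace (X × Y) |
      ∃ f : X → Y, UniformContinuous f ∧ F.val = {p : X × Y | p.2 = f p.1}} =
      (⋂ (z : X) (_ : z ∈ D) (n : ℕ),
        {F : EffrosSpace (X × Y) |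
          (F.val ∩ (Metric.ball z (1 / (n + 1)) ×ˢ (Set.univ : Set Y))).Nonempty}) ∩
      ⋂ (ε : ℚ) (_ : 0 < ε), ⋃ (δ : ℚ) (_ : 0 < δ),
        {F : EffrosSpace (X × Y) | ∃ p ∈ F.val, ∃ q ∈ F.val, (p, q) ∈ W ε δ}ᶜ := by
    ext F
    simp only [Set.mem_setOf_eq, Set.mem_inter_iff, Set.mem_iInter, Set.mem_iUnion,
      Set.mem_compl_iff, hWdef]
    constructor
    · rintro ⟨f, hf, hFval⟩
      constructor
      · intro z hz n
        refine ⟨(z, f z), ?_, ?_⟩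
        · rw [hFval]; rfl
        · exact ⟨Metric.mem_ball_self (by positivity), Set.mem_univ _⟩
      · intro ε hε
        obtain ⟨δ, hδ0, hδ⟩ := Metric.uniformContinuous_iff.1 hf (ε : ℝ) (by exact_mod_cast hε)
        obtain ⟨δ', hδ'0, hδ'δ⟩ := exists_rat_btwn hδ0
        refine ⟨δ', by exact_mod_cast hδ'0, ?_⟩
        rintro ⟨p, hp, q, hq, h1, h2⟩
        rw [hFval] at hp hq
        rw [Set.mem_setOf_eq] at hp hq
        rw [hp, hq] at h2
        exact absurd (hδ (lt_trans h1 hδ'δ)) (not_lt.2 h2.le)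
    · rintro ⟨hA, hB⟩
      -- positive form of the second condition
      have hB' : ∀ ε : ℚ, 0 < ε → ∃ δ : ℚ, 0 < δ ∧
          ∀ p ∈ F.val, ∀ q ∈ F.val, dist p.1 q.1 < (δ : ℝ) → dist p.2 q.2 ≤ (ε : ℝ) := by
        intro ε hε
        obtain ⟨δ, hδ0, hδ⟩ := hB ε hε
        refine ⟨δ, hδ0, fun p hp q hq h1 => ?_⟩
        by_contra h2
        exact hδ ⟨p, hp, q, hq, h1, lt_of_not_ge h2⟩
      -- points of F near any x
      have hnear : ∀ x : X, ∀ r : ℝ, 0 < r → ∃ p ∈ F.val, dist p.1 x < r := by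
        intro x r hr
        obtain ⟨d, hdD, hdx⟩ := Metric.dense_iff.1 hDd x (r / 2) (by positivity)
        obtain ⟨n, hn⟩ := exists_nat_one_div_lt (show (0:ℝ) < r / 2 by positivity)
        obtain ⟨p, hpF, hp⟩ := hA d hdx n
        refine ⟨p, hpF, ?_⟩
        have h1 : dist p.1 d < 1 / (n + 1) := hp.1
        have h2 : dist d x < r / 2 := hdD
        have h3 := dist_triangle p.1 d x
        linarith
      -- totality
      have hTot : ∀ x : X, ∃ y : Y, (x, y) ∈ F.val := by
        intro x
        have hchoice : ∀ k : ℕ, ∃ p : X × Y, p ∈ F.val ∧ dist p.1 x < 1 / (k + 1) := by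
          intro k
          obtain ⟨p, hp, h⟩ := hnear x (1 / (k + 1)) (by positivity)
          exact ⟨p, hp, h⟩
        choose pn hpnF hpnd using hchoice
        have hx : Filter.Tendsto (fun k => (pn k).1) Filter.atTop (nhds x) := by
          rw [Metric.tendsto_atTop]
          intro ε hε
          obtain ⟨N, hN⟩ := exists_nat_one_div_lt hε
          refine ⟨N, fun n hn => ?_⟩
          calc dist (pn n).1 x < 1 / (n + 1) := hpnd n
            _ ≤ 1 / (N + 1) := by
                apply one_div_le_one_div_of_le (by positivity)
                exact_mod_cast Nat.succ_le_succ hn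
            _ < ε := hN
        have hcauchy : CauchySeq (fun k => (pn k).2) := by
          rw [Metric.cauchySeq_iff]
          intro ε hε
          obtain ⟨ε', hε'0, hε'ε⟩ := exists_rat_btwn hε
          have hε'0' : (0:ℚ) < ε' := by exact_mod_cast hε'0
          obtain ⟨δ, hδ0, hδ⟩ := hB' ε' hε'0'
          have hδ0' : (0:ℝ) < (δ:ℝ) / 2 := by positivity
          obtain ⟨N, hN⟩ := exists_nat_one_div_lt hδ0'
          refine ⟨N, fun m hm n hn => ?_⟩
          have hdm : dist (pn m).1 (pn n).1 < (δ:ℝ) := by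
            calc dist (pn m).1 (pn n).1 ≤ dist (pn m).1 x + dist (pn n).1 x := dist_triangle_right _ _ _
              _ < 1 / (m + 1) + 1 / (n + 1) := add_lt_add (hpnd m) (hpnd n)
              _ ≤ 1 / (N + 1) + 1 / (N + 1) := by
                  have h1 : (1:ℝ) / (m + 1) ≤ 1 / (N + 1) :=
                    one_div_le_one_div_of_le (by positivity)
                      (by exact_mod_cast Nat.succ_le_succ hm)
                  have h2 : (1:ℝ) / (n + 1) ≤ 1 / (N + 1) :=
                    one_div_le_one_div_of_le (by positivity)
                      (by exact_mod_cast Nat.succ_le_succ hn)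
                  linarith
              _ < (δ:ℝ) / 2 + (δ:ℝ) / 2 := add_lt_add hN hN
              _ = (δ:ℝ) := by ring
          calc dist (pn m).2 (pn n).2 ≤ (ε' : ℝ) := hδ (pn m) (hpnF m) (pn n) (hpnF n) hdm
            _ < ε := hε'ε
        obtain ⟨y, hy⟩ := cauchySeq_tendsto_of_complete hcauchy
        refine ⟨y, ?_⟩
        have hmem : Filter.Tendsto pn Filter.atTop (nhds (x, y)) := by
          rw [nhds_prod_eq]
          exact Filter.Tendsto.prodMk hx hy
        exact F.prop.mem_of_tendsto hmem (Filter.Eventually.of_forall hpnF)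
      choose f hf using hTot
      -- uniqueness
      have hUniq : ∀ p ∈ F.val, p.2 = f p.1 := by
        intro p hp
        have hdle : ∀ ε : ℚ, 0 < ε → dist p.2 (f p.1) ≤ (ε : ℝ) := by
          intro ε hε
          obtain ⟨δ, hδ0, hδ⟩ := hB' ε hε
          exact hδ p hp (p.1, f p.1) (hf p.1) (by simpa using (by exact_mod_cast hδ0 : (0:ℝ) < δ))
        have : dist p.2 (f p.1) ≤ 0 := by
          by_contra h
          push_neg at h
          obtain ⟨ε, hε0, hεd⟩ := exists_rat_btwn h
          exact absurd (hdle ε (by exact_mod_cast hε0)) (not_le.2 hεd)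
        exact dist_le_zero.1 this
      refine ⟨f, ?_, ?_⟩
      · rw [Metric.uniformContinuous_iff]
        intro ε hε
        obtain ⟨ε', hε'0, hε'ε⟩ := exists_rat_btwn hε
        obtain ⟨δ, hδ0, hδ⟩ := hB' ε' (by exact_mod_cast hε'0)
        refine ⟨(δ:ℝ), by exact_mod_cast hδ0, fun {a b} hab => ?_⟩
        calc dist (f a) (f b) ≤ (ε':ℝ) := hδ (a, f a) (hf a) (b, f b) (hf b) hab
          _ < ε := hε'ε
      · ext p
        exact ⟨fun hp => hUniq p hp, fun hp => by
          rw [Set.mem_setOf_eq] at hp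
          have := hf p.1
          rwa [← hp, Prod.mk.eta] at this⟩
  rw [key]
  refine MeasurableSet.inter ?_ ?_
  · refine MeasurableSet.biInter hDc fun z hz => MeasurableSet.iInter fun n =>
      effros_meas (Metric.isOpen_ball.prod isOpen_univ)
  · refine MeasurableSet.iInter fun ε => MeasurableSet.iInter fun hε =>
      MeasurableSet.iUnion fun δ => MeasurableSet.iUnion fun hδ =>
        (effros_pair_meas (hWopen ε δ)).compl
end
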